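/- arXiv:2211.00920 — 8 statements merged into one kernel-verified Lean document; each statement's English description precedes it below -/
import Mathlib

section
/- The sum over k from 1 to N-1 of binomial(N-2, k-1) * k^(k-2) * (N-k)^(N-k-2) equals 2*N^(N-3), for any integer N ≥ 3. -/
/-!
Put `n = N - 2` and shift `k` by one, so that the sum becomes
`P = ∑ C(n,k) (k+1)^(k-1) (n-k+1)^(n-k-1)`. Splitting `n + 2 = (k + 1) + (n - k + 1)` writes
`(n + 2) P` as two sums that are mirror images of each other, and each equals `(n + 2)^n` by
Abel's identity `∑ C(n,k) (k+1)^(k-1) (z - k - 1)^(n-k) = z^n` at `z = n + 2`.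
Abel's identity follows by expanding `(z - (k + 1))^(n-k)` binomially and exchanging the sums:
the coefficient of `z^(n-m)` is `C(n,m)` times an `m`-th finite difference of the polynomial
`(x + 1)^(m-1)`, which vanishes for `m ≥ 1`.
-/

open Finset

section

variable {R : Type*} [CommRing R]

theorem sum_range_alternating_choose_mul_add_pow_eq_zero (x : R) {d m : ℕ} (h : d < m) :
    ∑ k ∈ range (m + 1), (-1) ^ (m - k) * (m.choose k : R) * ((k : R) + x) ^ d = 0 := by
  have := fwdDiff_iter_eq_sum_shift (1 : R) (fun r ↦ r ^ d) m x
  rw [fwdDiff_iter_pow_eq_zero_of_lt h] at this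
  simpa [zsmul_eq_mul, eq_comm, add_comm x] using this

-- The truncated exponent `k - 1` is harmless at `k = 0`, where the base is `1`.
theorem cast_add_one_pow_pred_mul_pow_sub {k m : ℕ} (h : k ≤ m) :
    ((k : R) + 1) ^ (k - 1) * ((k : R) + 1) ^ (m - k) = ((k : R) + 1) ^ (m - 1) := by
  rcases k with _ | k
  · simp
  · rw [← pow_add]; congr 1; omega

theorem sum_range_alternating_choose_mul_add_one_pow_pred (m n : ℕ) (hmn : m ≤ n) :
    ∑ k ∈ range (n + 1), (-1) ^ (m - k) * (m.choose k : R) * ((k : R) + 1) ^ (m - 1) =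
      if m = 0 then 1 else 0 := by
  rw [← sum_subset (range_subset_range.mpr (by omega : m + 1 ≤ n + 1)) fun k _ hk ↦ by
    rw [Nat.choose_eq_zero_of_lt (by simpa using hk)]; simp]
  split_ifs with hm
  · simp [hm]
  · exact sum_range_alternating_choose_mul_add_pow_eq_zero 1 (by omega)

theorem abel_identity (n : ℕ) (z : R) :
    ∑ k ∈ range (n + 1), (n.choose k : R) * ((k : R) + 1) ^ (k - 1) * (z - (k + 1)) ^ (n - k) =
      z ^ n := by
  have expand : ∀ k ∈ range (n + 1),
      (n.choose k : R) * ((k : R) + 1) ^ (k - 1) * (z - (k + 1)) ^ (n - k) =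
        ∑ m ∈ range (n + 1), (n.choose m : R) * z ^ (n - m) *
          ((-1) ^ (m - k) * (m.choose k : R) * ((k : R) + 1) ^ (m - 1)) := by
    intro k hk
    have hkn : k ≤ n := Nat.lt_succ_iff.mp (mem_range.mp hk)
    rw [(by omega : n + 1 = k + (n - k + 1)), sum_range_add,
      sum_eq_zero fun m hm ↦ by rw [Nat.choose_eq_zero_of_lt (mem_range.mp hm)]; simp, zero_add,
      sub_eq_neg_add, add_pow (-((k : R) + 1)) z, mul_sum]
    refine sum_congr rfl fun l hl ↦ ?_
    have hchoose : (n.choose (k + l) : R) * (k + l).choose k = n.choose k * (n - k).choose l := by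
      have := Nat.choose_mul (n := n) (k := k + l) (s := k) (by omega)
      rw [Nat.add_sub_cancel_left] at this
      exact_mod_cast congrArg (Nat.cast (R := R)) this
    have hpow := cast_add_one_pow_pred_mul_pow_sub (R := R) (le_self_add : k ≤ k + l)
    rw [Nat.add_sub_cancel_left] at hpow
    rw [Nat.add_sub_cancel_left, neg_pow, ← hpow, (by omega : n - (k + l) = n - k - l)]
    linear_combination
      (-(z ^ (n - k - l) * (-1) ^ l * ((k : R) + 1) ^ (k - 1) * ((k : R) + 1) ^ l)) * hchoose
  rw [sum_congr rfl expand, sum_comm]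
  simp_rw [← mul_sum]
  rw [sum_congr rfl fun m hm ↦ by
    rw [sum_range_alternating_choose_mul_add_one_pow_pred m n (Nat.lt_succ_iff.mp (mem_range.mp hm))]]
  simp

theorem cast_add_one_mul_pow_pred (k : ℕ) :
    ((k : R) + 1) * ((k : R) + 1) ^ (k - 1) = ((k : R) + 1) ^ k := by
  simpa [mul_comm] using cast_add_one_pow_pred_mul_pow_sub (R := R) (Nat.le_succ k)

theorem mul_sum_choose_mul_add_one_pow_pred_mul_pow_pred (n : ℕ) :
    ((n : R) + 2) * ∑ k ∈ range (n + 1),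
      (n.choose k : R) * ((k : R) + 1) ^ (k - 1) * (((n - k : ℕ) : R) + 1) ^ (n - k - 1) =
        2 * ((n : R) + 2) ^ n := by
  have habel : ∑ k ∈ range (n + 1),
      (n.choose k : R) * ((k : R) + 1) ^ (k - 1) * (((n - k : ℕ) : R) + 1) ^ (n - k) =
        ((n : R) + 2) ^ n := by
    rw [← abel_identity n ((n : R) + 2)]
    refine sum_congr rfl fun k hk ↦ ?_
    rw [Nat.cast_sub (Nat.lt_succ_iff.mp (mem_range.mp hk))]
    ring_nf
  have habel_reflect : ∑ k ∈ range (n + 1),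
      (n.choose k : R) * ((k : R) + 1) ^ k * (((n - k : ℕ) : R) + 1) ^ (n - k - 1) =
        ((n : R) + 2) ^ n := by
    rw [← habel, ← sum_range_reflect]
    refine sum_congr rfl fun k hk ↦ ?_
    have hkn := Nat.lt_succ_iff.mp (mem_range.mp hk)
    rw [Nat.add_sub_cancel, Nat.sub_sub_self hkn, Nat.choose_symm hkn]
    ring
  rw [mul_sum, two_mul]
  nth_rw 1 [← habel]
  rw [← habel_reflect, ← sum_add_distrib]
  refine sum_congr rfl fun k hk ↦ ?_
  have hsplit : (n : R) + 2 = ((k : R) + 1) + (((n - k : ℕ) : R) + 1) := by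
    rw [Nat.cast_sub (Nat.lt_succ_iff.mp (mem_range.mp hk))]; ring
  rw [hsplit, ← cast_add_one_mul_pow_pred k, ← cast_add_one_mul_pow_pred (n - k)]
  ring

end

theorem sum_forest_identity (N : ℕ) (hN : 3 ≤ N) :
    ∑ k ∈ Finset.Icc 1 (N - 1),
      (Nat.choose (N - 2) (k - 1)) * k ^ (k - 2) * (N - k) ^ (N - k - 2)
      = 2 * N ^ (N - 3) := by
  obtain ⟨n, rfl⟩ : ∃ n, N = n + 3 := ⟨N - 3, by omega⟩
  have hforest : (n + 3) * ∑ k ∈ range (n + 2),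
      (n + 1).choose k * (k + 1) ^ (k - 1) * (n + 1 - k + 1) ^ (n + 1 - k - 1) =
        2 * (n + 3) ^ (n + 1) := by
    exact_mod_cast mul_sum_choose_mul_add_one_pow_pred_mul_pow_pred (R := ℤ) (n + 1)
  have hshift : ∑ k ∈ Icc 1 (n + 3 - 1),
      (n + 3 - 2).choose (k - 1) * k ^ (k - 2) * (n + 3 - k) ^ (n + 3 - k - 2) =
        ∑ k ∈ range (n + 2),
          (n + 1).choose k * (k + 1) ^ (k - 1) * (n + 1 - k + 1) ^ (n + 1 - k - 1) := by
    rw [← Ico_add_one_right_eq_Icc, sum_Ico_eq_sum_range]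
    refine sum_congr (by simp) fun k hk ↦ ?_
    have hk := mem_range.mp hk
    rw [(by omega : n + 3 - (1 + k) = n + 1 - k + 1)]
    simp [add_comm 1 k, add_tsub_cancel_right]
  rw [hshift]
  refine Nat.eq_of_mul_eq_mul_left (by omega : 0 < n + 3) ?_
  rw [hforest, (by omega : n + 3 - 3 = n)]
  ring
end

section
/- Let χ₁ be the number of spanning trees of the complete graph K_N and χ₂ the number of spanning forests of K_N with exactly two components, one containing a fixed vertex u and the other containing a fixed vertex v (u ≠ v). Then χ₂ = 2*N^(N-3) for N ≥ 3. -/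
/-!
A forest on `V` in which every component contains exactly one vertex of a root set `R` is the
same thing as its parent map `f`, sending each non-root vertex to the next vertex on its path to
the root: conversely, the graph of any map that fixes `R` and whose iterates all reach `R` is such a
forest, because the number of steps to the root strictly decreases along `f`, which rules out
cycles. These maps are counted by a Prüfer code: repeatedly delete the greatest leaf and record
its parent. The code is a word of length `n - k` whose last letter is a root (`k = #R`), and every
such word arises from exactly one map, so there are `k * n ^ (n - k - 1)` of them. The two-component
forests separating `u` and `v` are the case `R = {u, v}`.
-/

open Finset Function SimpleGraph

variable {V : Type*}

/-- `f` is the parent map of a rooted forest whose non-root vertices form `S`: it fixes every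
root, and iterating it from any vertex eventually reaches a root. -/
structure IsParentMap (S : Set V) (f : V → V) : Prop where
  apply_of_notMem : ∀ x ∉ S, f x = x
  exists_iterate_notMem : ∀ x, ∃ n, f^[n] x ∉ S

structure IsRootedForest (G : SimpleGraph V) (R : Set V) : Prop where
  isAcyclic : G.IsAcyclic
  exists_reachable : ∀ x, ∃ r ∈ R, G.Reachable x r
  eq_of_reachable : ∀ r ∈ R, ∀ r' ∈ R, G.Reachable r r' → r = r'

def parentGraph (f : V → V) : SimpleGraph V := SimpleGraph.fromRel fun x y => f x = y

lemma parentGraph_adj {f : V → V} {x y : V} :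
    (parentGraph f).Adj x y ↔ x ≠ y ∧ (f x = y ∨ f y = x) :=
  fromRel_adj _ _ _

lemma parentGraph_reachable_iterate (f : V → V) (x : V) (n : ℕ) :
    (parentGraph f).Reachable x (f^[n] x) := by
  induction n with
  | zero => rfl
  | succ n ih =>
    rw [iterate_succ_apply']
    by_cases h : f (f^[n] x) = f^[n] x
    · rwa [h]
    · exact ih.trans (parentGraph_adj.mpr ⟨Ne.symm h, Or.inl rfl⟩).reachable

lemma exists_iterate_notMem_of_eqOn {S : Set V} {f g : V → V} (h : Set.EqOn f g S) {x : V}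
    (hg : ∃ n, g^[n] x ∉ S) : ∃ n, f^[n] x ∉ S := by
  obtain ⟨n, hn⟩ := hg
  induction n generalizing x with
  | zero => exact ⟨0, hn⟩
  | succ n ih =>
    by_cases hx : x ∈ S
    · obtain ⟨m, hm⟩ := ih (x := g x) hn
      exact ⟨m + 1, by rwa [iterate_succ_apply, h hx]⟩
    · exact ⟨0, hx⟩

lemma SimpleGraph.IsAcyclic.adj_of_le_of_reachable {G H : SimpleGraph V} (hG : G.IsAcyclic)
    (hHG : H ≤ G) {x y : V} (hxy : G.Adj x y) (h : H.Reachable x y) : H.Adj x y := by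
  obtain ⟨p, hp⟩ := h.exists_isPath
  have := (hG.subsingleton_path x y).elim ⟨p.mapLe hHG, hp.mapLe hHG⟩ (Path.singleton hxy)
  exact Walk.adj_of_length_eq_one (by simpa using congrArg (fun q : G.Path x y => q.1.length) this)

namespace IsParentMap

variable {S : Set V} {f g : V → V} {x y : V}

lemma mem_of_apply_ne (hf : IsParentMap S f) (hx : f x ≠ x) : x ∈ S :=
  by_contra fun h => hx (hf.apply_of_notMem x h)

lemma apply_ne (hf : IsParentMap S f) (hx : x ∈ S) : f x ≠ x := fun h => by
  obtain ⟨n, hn⟩ := hf.exists_iterate_notMem x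
  exact hn (by rwa [iterate_fixed h])

lemma diff_singleton_update_self [DecidableEq V] (hf : IsParentMap S f) (ℓ : V) :
    IsParentMap (S \ {ℓ}) (update f ℓ ℓ) where
  apply_of_notMem x hx := by
    rcases eq_or_ne x ℓ with rfl | hne
    · exact Function.update_self ..
    · rw [update_of_ne hne]
      exact hf.apply_of_notMem x fun hxS => hx ⟨hxS, hne⟩
  exists_iterate_notMem x :=
    exists_iterate_notMem_of_eqOn (g := f) (S := S \ {ℓ}) (fun _ hy => update_of_ne hy.2 _ _)
      ((hf.exists_iterate_notMem x).imp fun _ hn h => hn h.1)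

lemma update_of_diff_singleton [DecidableEq V] {ℓ a : V} (hg : IsParentMap (S \ {ℓ}) g)
    (hℓ : ℓ ∈ S) (ha : a ≠ ℓ) (hℓg : ∀ x ∈ S \ {ℓ}, g x ≠ ℓ) : IsParentMap S (update g ℓ a) := by
  have hne : ∀ x, update g ℓ a x ≠ ℓ := by
    intro x
    rcases eq_or_ne x ℓ with rfl | hx
    · simpa
    rw [update_of_ne hx]
    by_cases hxS : x ∈ S
    · exact hℓg x ⟨hxS, hx⟩
    · rwa [hg.apply_of_notMem x fun h => hxS h.1]
  refine ⟨fun x hx => ?_, fun x => ?_⟩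
  · rw [update_of_ne (ne_of_mem_of_not_mem hℓ hx).symm]
    exact hg.apply_of_notMem x fun h => hx h.1
  · obtain ⟨n, hn⟩ := exists_iterate_notMem_of_eqOn (f := update g ℓ a) (g := g) (S := S \ {ℓ})
      (fun _ hy => update_of_ne hy.2 _ _)
      (hg.exists_iterate_notMem (update g ℓ a x))
    refine ⟨n + 1, fun hS => hn ⟨hS, ?_⟩⟩
    rw [← iterate_succ_apply, iterate_succ_apply']
    exact hne _

open Classical in
noncomputable def height (hf : IsParentMap S f) (x : V) : ℕ :=
  Nat.find (hf.exists_iterate_notMem x)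

lemma iterate_height_notMem (hf : IsParentMap S f) (x : V) : f^[hf.height x] x ∉ S := by
  classical exact Nat.find_spec (hf.exists_iterate_notMem x)

lemma height_le (hf : IsParentMap S f) {n : ℕ} (hn : f^[n] x ∉ S) : hf.height x ≤ n := by
  classical exact Nat.find_min' _ hn

lemma height_eq_zero (hf : IsParentMap S f) (hx : x ∉ S) : hf.height x = 0 :=
  Nat.le_zero.mp (hf.height_le hx)

lemma height_apply_lt (hf : IsParentMap S f) (hx : x ∈ S) : hf.height (f x) < hf.height x := by
  obtain ⟨k, hk⟩ := Nat.exists_eq_succ_of_ne_zero (n := hf.height x) fun h0 => by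
    simpa [h0, hx] using hf.iterate_height_notMem x
  have := hf.iterate_height_notMem x
  rw [hk, iterate_succ_apply] at this
  exact hk ▸ Nat.lt_succ_of_le (hf.height_le this)

lemma adj_cases (hf : IsParentMap S f) (h : (parentGraph f).Adj x y) :
    (f x = y ∧ hf.height y < hf.height x) ∨ (f y = x ∧ hf.height x < hf.height y) := by
  obtain ⟨hne, rfl | rfl⟩ := parentGraph_adj.mp h
  · exact Or.inl ⟨rfl, hf.height_apply_lt (hf.mem_of_apply_ne hne.symm)⟩
  · exact Or.inr ⟨rfl, hf.height_apply_lt (hf.mem_of_apply_ne hne)⟩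

lemma height_le_max_of_isPath (hf : IsParentMap S f) {a b : V} {p : (parentGraph f).Walk a b}
    (hp : p.IsPath) : ∀ z ∈ p.support, hf.height z ≤ max (hf.height a) (hf.height b) := by
  induction p with
  | nil => simp
  | @cons a c b hac q ih =>
    obtain ⟨hq, ha⟩ := Walk.cons_isPath_iff _ _ |>.mp hp
    -- An interior maximum `c` would have both path neighbours equal to its parent.
    have hc : hf.height c ≤ max (hf.height a) (hf.height b) := by
      by_contra! hlt
      have hca : f c = a := by
        rcases hf.adj_cases hac with ⟨_, h⟩ | ⟨h, _⟩
        · exact absurd hlt (not_lt.mpr (h.le.trans (le_max_left _ _)))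
        · exact h
      cases q with
      | nil => exact absurd hlt (not_lt.mpr (le_max_right _ _))
      | @cons _ d _ hcd q' =>
        rcases hf.adj_cases hcd with ⟨hd, _⟩ | ⟨_, hlt'⟩
        · exact ha (by simp [← hca, hd])
        · have := ih hq d (by simp)
          omega
    intro z hz
    rcases List.mem_cons.mp hz with rfl | hz
    · exact le_max_left _ _
    · exact (ih hq z hz).trans (max_le hc (le_max_right _ _))

lemma snd_eq_of_isPath (hf : IsParentMap S f) {a b : V} {p : (parentGraph f).Walk a b}
    (hp : p.IsPath) (hab : a ≠ b) (hba : hf.height b ≤ hf.height a) : p.snd = f a := by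
  cases p with
  | nil => exact absurd rfl hab
  | @cons _ c _ hac q =>
    rw [Walk.snd_cons]
    rcases hf.adj_cases hac with ⟨h, _⟩ | ⟨_, hlt⟩
    · exact h.symm
    · have := hf.height_le_max_of_isPath hp c (by simp)
      omega

lemma isAcyclic (hf : IsParentMap S f) : (parentGraph f).IsAcyclic := by
  intro x c hc
  cases c with
  | nil => exact hc.not_nil Walk.Nil.nil
  | @cons _ y _ hxy q =>
    obtain ⟨hq, hedge⟩ := (Walk.cons_isCycle_iff _ _).mp hc
    -- The path `q` must leave the higher endpoint of `x y` towards its parent, i.e. through `x y`.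
    rcases hf.adj_cases hxy with ⟨hy, hlt⟩ | ⟨hx, hlt⟩
    · have hsnd := hf.snd_eq_of_isPath hq.reverse hxy.ne hlt.le
      have := q.reverse.mk_start_snd_mem_edges (Walk.not_nil_of_ne hxy.ne)
      rw [hsnd, hy, Walk.edges_reverse, List.mem_reverse] at this
      exact hedge this
    · have hsnd := hf.snd_eq_of_isPath hq hxy.ne.symm hlt.le
      have := q.mk_start_snd_mem_edges (Walk.not_nil_of_ne hxy.ne.symm)
      rw [hsnd, hx, Sym2.eq_swap] at this
      exact hedge this

lemma eq_of_reachable (hf : IsParentMap S f) {r r' : V} (hr : r ∉ S) (hr' : r' ∉ S)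
    (h : (parentGraph f).Reachable r r') : r = r' := by
  obtain ⟨p⟩ := h
  suffices ∀ {a b : V} (p : (parentGraph f).Walk a b), (∃ n, f^[n] a = r) → ∃ n, f^[n] b = r by
    obtain ⟨n, hn⟩ := this p ⟨0, rfl⟩
    rwa [iterate_fixed (hf.apply_of_notMem r' hr'), eq_comm] at hn
  intro a b p
  induction p with
  | nil => exact id
  | @cons a c _ hac _ ih =>
    rintro ⟨n, hn⟩
    refine ih ?_
    rcases (parentGraph_adj.mp hac).2 with rfl | rfl
    · refine ⟨n, ?_⟩
      rw [← iterate_succ_apply, iterate_succ_apply', hn]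
      exact hf.apply_of_notMem r hr
    · exact ⟨n + 1, hn⟩

lemma isRootedForest (hf : IsParentMap S f) : IsRootedForest (parentGraph f) Sᶜ where
  isAcyclic := hf.isAcyclic
  exists_reachable x :=
    let ⟨n, hn⟩ := hf.exists_iterate_notMem x
    ⟨f^[n] x, hn, parentGraph_reachable_iterate f x n⟩
  eq_of_reachable _ hr _ hr' h := hf.eq_of_reachable hr hr' h

end IsParentMap

namespace IsRootedForest

variable {G : SimpleGraph V} {R : Set V} (hG : IsRootedForest G R) {x r : V}

noncomputable def root (x : V) : V := (hG.exists_reachable x).choose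

lemma root_mem (x : V) : hG.root x ∈ R := (hG.exists_reachable x).choose_spec.1

lemma reachable_root (x : V) : G.Reachable x (hG.root x) := (hG.exists_reachable x).choose_spec.2

lemma root_eq (hr : r ∈ R) (h : G.Reachable x r) : hG.root x = r :=
  hG.eq_of_reachable _ (hG.root_mem x) _ hr ((hG.reachable_root x).symm.trans h)

noncomputable def pathToRoot (x : V) : G.Walk x (hG.root x) :=
  (hG.reachable_root x).exists_isPath.choose

lemma isPath_pathToRoot (x : V) : (hG.pathToRoot x).IsPath :=
  (hG.reachable_root x).exists_isPath.choose_spec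

/-- The next vertex on the way from `x` to its root (`x` itself if `x` is a root, as the path is
then `nil`). -/
noncomputable def parent (x : V) : V := (hG.pathToRoot x).snd

lemma parent_eq_snd {p : G.Walk x r} (hp : p.IsPath) (hr : r ∈ R) : hG.parent x = p.snd := by
  obtain rfl := hG.root_eq hr ⟨p⟩
  exact congrArg (fun q : G.Path x _ => q.1.snd)
    ((hG.isAcyclic.subsingleton_path _ _).elim ⟨_, hG.isPath_pathToRoot x⟩ ⟨p, hp⟩)

lemma parent_of_mem (hx : x ∈ R) : hG.parent x = x :=
  hG.parent_eq_snd Walk.IsPath.nil hx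

lemma adj_parent (hx : x ∉ R) : G.Adj x (hG.parent x) :=
  Walk.adj_snd (Walk.not_nil_of_ne fun h => hx (h ▸ hG.root_mem x))

lemma isParentMap_parent : IsParentMap Rᶜ hG.parent where
  apply_of_notMem x hx := hG.parent_of_mem (Set.notMem_compl_iff.mp hx)
  exists_iterate_notMem x := by
    obtain ⟨r, hr, hxr⟩ := hG.exists_reachable x
    obtain ⟨p, hp⟩ := hxr.exists_isPath
    induction p with
    | nil => exact ⟨0, Set.notMem_compl_iff.mpr hr⟩
    | cons _ q ih =>
      obtain ⟨n, hn⟩ := ih hr ⟨q⟩ (Walk.cons_isPath_iff _ _ |>.mp hp).1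
      refine ⟨n + 1, ?_⟩
      rwa [iterate_succ_apply, hG.parent_eq_snd hp hr, Walk.snd_cons]

lemma parentGraph_parent : parentGraph hG.parent = G := by
  have hle : parentGraph hG.parent ≤ G := fun x y h => by
    obtain ⟨hne, rfl | rfl⟩ := parentGraph_adj.mp h
    · exact hG.adj_parent fun hx => hne (hG.parent_of_mem hx).symm
    · exact (hG.adj_parent fun hy => hne (hG.parent_of_mem hy)).symm
  have hroot : ∀ z, (parentGraph hG.parent).Reachable z (hG.root z) := fun z => by
    obtain ⟨r, hr, hzr⟩ := hG.isParentMap_parent.isRootedForest.exists_reachable z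
    rwa [hG.root_eq (compl_compl R ▸ hr) (hzr.mono hle)]
  refine le_antisymm hle fun x y hxy => hG.isAcyclic.adj_of_le_of_reachable hle hxy ?_
  have hxy' : hG.root x = hG.root y :=
    hG.root_eq (hG.root_mem y) (hxy.reachable.trans (hG.reachable_root y))
  exact (hroot x).trans (hxy' ▸ (hroot y).symm)

end IsRootedForest

lemma IsParentMap.parent_eq {S : Set V} {f : V → V} (hf : IsParentMap S f)
    (hG : IsRootedForest (parentGraph f) Sᶜ) : hG.parent = f := by
  funext x
  by_cases hx : x ∈ S
  · exact hf.snd_eq_of_isPath (hG.isPath_pathToRoot x) (fun h => hG.root_mem x (h ▸ hx))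
      ((hf.height_eq_zero (hG.root_mem x)).trans_le (Nat.zero_le _))
  · rw [hG.parent_of_mem hx, hf.apply_of_notMem x hx]

noncomputable def parentMapEquivRootedForest (S : Set V) :
    {f : V → V // IsParentMap S f} ≃ {G : SimpleGraph V // IsRootedForest G Sᶜ} where
  toFun f := ⟨parentGraph f, f.2.isRootedForest⟩
  invFun G := ⟨G.2.parent, by simpa only [compl_compl] using G.2.isParentMap_parent⟩
  left_inv f := Subtype.ext (f.2.parent_eq _)
  right_inv G := Subtype.ext G.2.parentGraph_parent

section Prufer

variable [LinearOrder V] {S : Finset V} {f g : V → V}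

lemma IsParentMap.erase_update_self (hf : IsParentMap ↑S f) (ℓ : V) :
    IsParentMap ↑(S.erase ℓ) (update f ℓ ℓ) := by
  rw [coe_erase]
  exact hf.diff_singleton_update_self ℓ

def leaves (S : Finset V) (f : V → V) : Finset V := S \ S.image f

lemma IsParentMap.leaves_nonempty (hf : IsParentMap ↑S f) (hS : S.Nonempty) :
    (leaves S f).Nonempty := by
  by_contra h
  have hsub : S ⊆ S.image f := sdiff_eq_empty_iff_subset.mp (not_nonempty_iff_eq_empty.mp h)
  have himage : S = S.image f := eq_of_subset_of_card_le hsub card_image_le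
  have hmaps : Set.MapsTo f S S := fun x hx => himage ▸ mem_image_of_mem f hx
  obtain ⟨x, hx⟩ := hS
  obtain ⟨n, hn⟩ := hf.exists_iterate_notMem x
  exact hn (hmaps.iterate n hx)

def pruferCode (S : Finset V) (f : V → V) : List V :=
  if h : (leaves S f).Nonempty then
    f ((leaves S f).max' h) ::
      pruferCode (S.erase ((leaves S f).max' h))
        (update f ((leaves S f).max' h) ((leaves S f).max' h))
  else []
termination_by #S
decreasing_by exact card_erase_lt_of_mem (mem_sdiff.mp (max'_mem _ h)).1

lemma pruferCode_empty : pruferCode ∅ f = [] := by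
  rw [pruferCode, dif_neg (by simp [leaves])]

lemma pruferCode_of_isGreatest {ℓ : V} (hℓ : IsGreatest (leaves S f : Set V) ℓ) :
    pruferCode S f = f ℓ :: pruferCode (S.erase ℓ) (update f ℓ ℓ) := by
  have h : (leaves S f).Nonempty := ⟨ℓ, hℓ.1⟩
  obtain rfl : (leaves S f).max' h = ℓ := (isGreatest_max' _ h).unique hℓ
  rw [pruferCode, dif_pos h]

@[elab_as_elim]
lemma IsParentMap.leaves_induction {P : Finset V → (V → V) → Prop}
    (empty : ∀ f, IsParentMap ↑(∅ : Finset V) f → P ∅ f)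
    (step : ∀ (S : Finset V) (f : V → V) (ℓ : V), IsParentMap ↑S f →
      IsGreatest (leaves S f : Set V) ℓ →
      P (S.erase ℓ) (update f ℓ ℓ) → P S f)
    (hf : IsParentMap ↑S f) : P S f := by
  induction S using Finset.strongInduction generalizing f with
  | H S ih =>
    rcases S.eq_empty_or_nonempty with rfl | hS
    · exact empty f hf
    have hℓ := isGreatest_max' _ (hf.leaves_nonempty hS)
    have hℓS := (mem_sdiff.mp hℓ.1).1
    exact step S f _ hf hℓ (ih _ (erase_ssubset hℓS) (hf.erase_update_self _))

lemma IsParentMap.length_pruferCode (hf : IsParentMap ↑S f) : (pruferCode S f).length = #S := by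
  refine hf.leaves_induction (fun f _ => by simp [pruferCode_empty]) fun S f ℓ _ hℓ ih => ?_
  rw [pruferCode_of_isGreatest hℓ, List.length_cons, ih,
      card_erase_add_one (mem_sdiff.mp hℓ.1).1]

lemma image_erase_update (f : V → V) (ℓ a : V) :
    (S.erase ℓ).image (update f ℓ a) = (S.erase ℓ).image f :=
  image_congr fun _ hx => update_of_ne (mem_erase.mp hx).1 _ _

lemma IsParentMap.toFinset_pruferCode (hf : IsParentMap ↑S f) :
    (pruferCode S f).toFinset = S.image f := by
  refine hf.leaves_induction (fun f _ => by simp [pruferCode_empty]) fun S f ℓ _ hℓ ih => ?_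
  rw [pruferCode_of_isGreatest hℓ, List.toFinset_cons, ih, image_erase_update,
    ← image_insert, insert_erase (mem_sdiff.mp hℓ.1).1]

lemma IsParentMap.getLast_pruferCode_notMem (hf : IsParentMap ↑S f) :
    ∀ x ∈ (pruferCode S f).getLast?, x ∉ S := by
  refine hf.leaves_induction (fun f _ => by simp [pruferCode_empty]) fun S f ℓ hf hℓ ih => ?_
  obtain ⟨hℓS, hℓf⟩ := mem_sdiff.mp hℓ.1
  have hf' := hf.erase_update_self ℓ
  rw [pruferCode_of_isGreatest hℓ]
  intro x hx
  cases hrest : pruferCode (S.erase ℓ) (update f ℓ ℓ) with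
  | nil =>
    obtain rfl : f ℓ = x := by simpa [hrest] using hx
    have hempty : S.erase ℓ = ∅ := by simpa [hrest] using hf'.length_pruferCode.symm
    exact fun hS => notMem_empty _ (hempty ▸ mem_erase.mpr ⟨hf.apply_ne hℓS, hS⟩)
  | cons b t =>
    rw [hrest, List.getLast?_cons_cons, ← hrest] at hx
    have hxℓ : x ≠ ℓ := by
      rintro rfl
      have := hf'.toFinset_pruferCode ▸ List.mem_toFinset.mpr (List.mem_of_mem_getLast? hx)
      rw [image_erase_update] at this
      exact hℓf (image_subset_image (erase_subset _ S) this)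
    exact fun hS => ih x hx (mem_erase.mpr ⟨hxℓ, hS⟩)

lemma injOn_pruferCode : Set.InjOn (pruferCode S) {f | IsParentMap ↑S f} := by
  intro f hf
  refine IsParentMap.leaves_induction (fun f hf g hg _ => funext fun x => ?_)
    (fun S f ℓ hf hℓ ih g hg h => ?_) hf
  · rw [hf.apply_of_notMem x (notMem_empty x), IsParentMap.apply_of_notMem hg x (notMem_empty x)]
  have hleaves : leaves S g = leaves S f := by
    rw [leaves, leaves, ← hf.toFinset_pruferCode, ← IsParentMap.toFinset_pruferCode hg, h]
  rw [pruferCode_of_isGreatest hℓ, pruferCode_of_isGreatest (f := g) (hleaves ▸ hℓ),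
    List.cons.injEq] at h
  have hupdate := ih (IsParentMap.erase_update_self hg ℓ) h.2
  funext x
  rcases eq_or_ne x ℓ with rfl | hx
  · exact h.1
  · simpa [hx] using congrFun hupdate x

lemma sdiff_toFinset_nonempty {l : List V} (hlen : l.length = #S)
    (hlast : ∀ x ∈ l.getLast?, x ∉ S) (hl : l ≠ []) : (S \ l.toFinset).Nonempty := by
  rw [sdiff_nonempty]
  intro hsub
  have hx : l.getLast hl ∉ S := hlast _ (List.getLast?_eq_some_getLast hl)
  have hle := card_le_card fun y hy => mem_erase.mpr ⟨ne_of_mem_of_not_mem hy hx, hsub hy⟩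
  rw [card_erase_of_mem (List.mem_toFinset.mpr (List.getLast_mem hl))] at hle
  have := l.toFinset_card_le
  have := List.length_pos_of_ne_nil hl
  omega

lemma exists_pruferCode_eq (l : List V) (S : Finset V) (hlen : l.length = #S)
    (hlast : ∀ x ∈ l.getLast?, x ∉ S) : ∃ f, IsParentMap ↑S f ∧ pruferCode S f = l := by
  induction l generalizing S with
  | nil =>
    obtain rfl := card_eq_zero.mp hlen.symm
    exact ⟨id, ⟨fun _ _ => rfl, fun x => ⟨0, notMem_empty x⟩⟩, pruferCode_empty⟩
  | cons a rest ih =>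
    have hT := sdiff_toFinset_nonempty hlen hlast (List.cons_ne_nil a rest)
    obtain ⟨ℓ, hℓ⟩ : ∃ ℓ, IsGreatest ((S \ (a :: rest).toFinset : Finset V) : Set V) ℓ :=
      ⟨_, isGreatest_max' _ hT⟩
    obtain ⟨hℓS, hℓl⟩ := mem_sdiff.mp hℓ.1
    have hℓa : a ≠ ℓ := fun h => hℓl (by simp [h])
    have hℓrest : ℓ ∉ rest.toFinset := fun h => hℓl (by simp_all)
    have hlast' : ∀ x ∈ rest.getLast?, x ∉ S.erase ℓ := by
      intro x hx hxS
      cases rest with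
      | nil => simp at hx
      | cons b t => exact hlast x (by rwa [List.getLast?_cons_cons]) (mem_of_mem_erase hxS)
    obtain ⟨g, hg, hgl⟩ := ih (S.erase ℓ) (by simp [card_erase_of_mem hℓS, ← hlen]) hlast'
    have hgimage : (S.erase ℓ).image g = rest.toFinset := by rw [← hgl, hg.toFinset_pruferCode]
    have hf : IsParentMap ↑S (update g ℓ a) := by
      refine (coe_erase ℓ S ▸ hg).update_of_diff_singleton hℓS hℓa fun x hx h => hℓrest ?_
      exact hgimage ▸ mem_image.mpr ⟨x, mem_erase.mpr ⟨hx.2, hx.1⟩, h⟩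
    have himage : S.image (update g ℓ a) = (a :: rest).toFinset := by
      conv_lhs => rw [← insert_erase hℓS]
      rw [image_insert, update_self, image_erase_update, hgimage, List.toFinset_cons]
    have hleaves : leaves S (update g ℓ a) = S \ (a :: rest).toFinset := by rw [leaves, himage]
    refine ⟨_, hf, ?_⟩
    rw [pruferCode_of_isGreatest (hleaves ▸ hℓ), update_self, update_idem,
      update_eq_self_iff.mpr (hg.apply_of_notMem ℓ (by simp)).symm, hgl]

def vectorSnocEquiv (n : ℕ) (p : V → Prop) :
    List.Vector V n × {x // p x} ≃ {l : List V // l.length = n + 1 ∧ ∀ x ∈ l.getLast?, p x} where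
  toFun v := ⟨v.1.toList ++ [v.2.1], by simp, by simp [v.2.2]⟩
  invFun l := (⟨l.1.dropLast, by simp [l.2.1]⟩,
    ⟨l.1.getLast (List.ne_nil_of_length_eq_add_one l.2.1),
      l.2.2 _ (List.getLast?_eq_some_getLast _)⟩)
  left_inv v := by ext <;> simp
  right_inv l := Subtype.ext (List.dropLast_append_getLast _)

end Prufer

theorem card_isParentMap [Fintype V] (S : Finset V) (hS : S.Nonempty) :
    Nat.card {f : V → V // IsParentMap ↑S f} =
      (Fintype.card V - #S) * Fintype.card V ^ (#S - 1) := by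
  let : LinearOrder V := LinearOrder.lift' _ (Fintype.equivFin V).injective
  obtain ⟨n, hn⟩ := Nat.exists_eq_add_one_of_ne_zero hS.card_pos.ne'
  let code (f : {f : V → V // IsParentMap ↑S f}) :
      {l : List V // l.length = n + 1 ∧ ∀ x ∈ l.getLast?, x ∉ S} :=
    ⟨pruferCode S f.1, f.2.length_pruferCode.trans hn, f.2.getLast_pruferCode_notMem⟩
  have hcode : Bijective code := by
    refine ⟨fun f g h => Subtype.ext (injOn_pruferCode f.2 g.2 (congrArg Subtype.val h)),
      fun l => ?_⟩
    obtain ⟨f, hf, hfl⟩ := exists_pruferCode_eq l.1 S (l.2.1.trans hn.symm) l.2.2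
    exact ⟨⟨f, hf⟩, Subtype.ext hfl⟩
  rw [Nat.card_eq_of_bijective code hcode, ← Nat.card_congr (vectorSnocEquiv n _), Nat.card_prod,
    Nat.card_eq_fintype_card, card_vector, Nat.card_eq_fintype_card, Fintype.card_subtype_compl,
    Fintype.card_coe, hn, Nat.add_sub_cancel, mul_comm]

/-- The generalized Cayley formula. -/
theorem card_isRootedForest [Fintype V] (R : Finset V) (hR : R ≠ univ) :
    Nat.card {G : SimpleGraph V // IsRootedForest G ↑R} =
      #R * Fintype.card V ^ (Fintype.card V - #R - 1) := by
  classical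
  have hRc : Rᶜ.Nonempty := (compl_ne_univ_iff_nonempty _).mp (by rwa [compl_compl])
  rw [← compl_compl (R : Set V), ← coe_compl, ← Nat.card_congr (parentMapEquivRootedForest _),
    card_isParentMap _ hRc, card_compl, Nat.sub_sub_self (card_le_univ R)]

def spanningSubgraphEquiv (P : SimpleGraph V → Prop) :
    {H : (⊤ : SimpleGraph V).Subgraph // H.IsSpanning ∧ P H.spanningCoe} ≃
      {G : SimpleGraph V // P G} where
  toFun H := ⟨H.1.spanningCoe, H.2.2⟩
  invFun G := ⟨toSubgraph G.1 le_top, toSubgraph.isSpanning _ _, G.2⟩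
  left_inv H := Subtype.ext (Subgraph.ext (Subgraph.isSpanning_iff.mp H.2.1).symm rfl)
  right_inv _ := rfl

lemma isRootedForest_pair_iff {G : SimpleGraph V} {u v : V} (huv : u ≠ v) :
    IsRootedForest G {u, v} ↔
      G.IsAcyclic ∧ ¬ G.Reachable u v ∧ ∀ w, G.Reachable w u ∨ G.Reachable w v := by
  constructor
  · intro hG
    refine ⟨hG.isAcyclic, fun h => huv (hG.eq_of_reachable u (by simp) v (by simp) h), fun w => ?_⟩
    obtain ⟨r, rfl | rfl, hwr⟩ := hG.exists_reachable w
    exacts [Or.inl hwr, Or.inr hwr]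
  · rintro ⟨hac, hnr, hreach⟩
    refine ⟨hac, fun w => (hreach w).elim (⟨u, by simp, ·⟩) (⟨v, by simp, ·⟩), ?_⟩
    rintro r (rfl | rfl) r' (rfl | rfl) h
    exacts [rfl, absurd h hnr, absurd h.symm hnr, rfl]

theorem two_component_spanning_forests_of_complete_graph
    (N : ℕ) (hN : 3 ≤ N) (u v : Fin N) (huv : u ≠ v) :
    Nat.card {H : (⊤ : SimpleGraph (Fin N)).Subgraph //
        H.IsSpanning ∧ H.spanningCoe.IsAcyclic ∧
        ¬ H.spanningCoe.Reachable u v ∧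
        (∀ w : Fin N, H.spanningCoe.Reachable w u ∨ H.spanningCoe.Reachable w v)}
      = 2 * N ^ (N - 3) := by
  have hcard : #({u, v} : Finset (Fin N)) = 2 := card_pair huv
  have hR : ({u, v} : Finset (Fin N)) ≠ univ := fun h => by
    simpa [h] using hcard.trans_lt hN
  have := card_isRootedForest _ hR
  rw [coe_pair, hcard, Fintype.card_fin] at this
  rw [Nat.card_congr ((spanningSubgraphEquiv fun G =>
      G.IsAcyclic ∧ ¬ G.Reachable u v ∧ ∀ w, G.Reachable w u ∨ G.Reachable w v).trans
    (Equiv.subtypeEquivRight fun G => (isRootedForest_pair_iff huv).symm)), this]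
  rfl
end

section
/- For the complete graph K_N, if χ₁ = N^(N-2) is the number of spanning trees and χ₂ the number of spanning forests with two components separating two fixed vertices, then the multiset identity binomial(N,2) * χ₂ = (N-1) * χ₁ holds. -/
/-!
Adding the edge `ab` to a two-tree spanning forest separating `a` from `b` gives a spanning tree
containing `ab`, and deleting `ab` from such a tree gives back the forest. So the pairs
(ordered pair `(a, b)` of distinct vertices, forest separating them) correspond to the pairs
(spanning tree, oriented edge of it). Relabelling vertices shows that every ordered pair is
separated by the same number `χ₂` of forests, and a tree on `N` vertices has `2 (N - 1)` oriented
edges, so `N (N - 1) χ₂ = 2 (N - 1) χ₁`.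
-/

namespace SimpleGraph

variable {V : Type*}

/-- `G` is a spanning forest with exactly two trees, one containing `a` and the other `b`. -/
def IsSeparatingTwoForest (G : SimpleGraph V) (a b : V) : Prop :=
  G.IsAcyclic ∧ ¬G.Reachable a b ∧ ∀ w, G.Reachable w a ∨ G.Reachable w b

theorem IsSeparatingTwoForest.ne {G : SimpleGraph V} {a b : V}
    (h : G.IsSeparatingTwoForest a b) : a ≠ b :=
  fun hab => h.2.1 (hab ▸ .rfl)

theorem Iso.isSeparatingTwoForest_iff {W : Type*} {G : SimpleGraph V} {G' : SimpleGraph W}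
    (φ : G ≃g G') {a b : V} :
    G'.IsSeparatingTwoForest (φ a) (φ b) ↔ G.IsSeparatingTwoForest a b := by
  simp only [IsSeparatingTwoForest, φ.isAcyclic_iff, φ.surjective.forall, Iso.reachable_iff]

theorem card_isSeparatingTwoForest_congr {a b u v : V} (hab : a ≠ b) (huv : u ≠ v) :
    Nat.card {G : SimpleGraph V // G.IsSeparatingTwoForest a b} =
      Nat.card {G : SimpleGraph V // G.IsSeparatingTwoForest u v} := by
  obtain ⟨σ, hσ⟩ := Equiv.Perm.exists_extending_pair ![a, b] ![u, v]
    (injective_pair_iff_ne.2 hab) (injective_pair_iff_ne.2 huv)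
  obtain rfl : σ a = u := hσ 0
  obtain rfl : σ b = v := hσ 1
  refine Nat.card_congr (σ.simpleGraph.subtypeEquiv fun G => ?_)
  rw [Equiv.simpleGraph_apply, ← (Iso.comap σ.symm G).isSeparatingTwoForest_iff]
  simp

theorem reachable_deleteEdges_or_of_reachable {G : SimpleGraph V} {a b w : V}
    (h : G.Reachable w a) :
    (G.deleteEdges {s(a, b)}).Reachable w a ∨ (G.deleteEdges {s(a, b)}).Reachable w b := by
  set H := G.deleteEdges {s(a, b)}
  obtain ⟨p⟩ := h
  suffices ∀ {x} (_ : G.Walk w x), H.Reachable x a ∨ H.Reachable x b →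
      H.Reachable w a ∨ H.Reachable w b from
    this p (Or.inl .rfl)
  clear p
  intro x p
  induction p with
  | nil => exact id
  | @cons c d _ hcd _ ih =>
    intro hx
    by_cases he : s(c, d) = s(a, b)
    · rcases Sym2.eq_iff.1 he with ⟨rfl, -⟩ | ⟨rfl, -⟩
      · exact Or.inl .rfl
      · exact Or.inr .rfl
    · have hH : H.Adj c d := by simpa [H, hcd] using he
      exact (ih hx).imp hH.reachable.trans hH.reachable.trans

theorem sup_edge_adj (G : SimpleGraph V) {a b : V} (hab : a ≠ b) : (G ⊔ edge a b).Adj a b :=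
  (sup_adj _ _ _ _).2 <| Or.inr <| (edge_adj a b a b).2 ⟨Or.inl ⟨rfl, rfl⟩, hab⟩

theorem IsSeparatingTwoForest.isTree_sup_edge {F : SimpleGraph V} {a b : V}
    (hF : F.IsSeparatingTwoForest a b) : (F ⊔ edge a b).IsTree := by
  have hadj := F.sup_edge_adj hF.ne
  obtain ⟨hacyclic, hab, hreach⟩ := hF
  refine ⟨(connected_iff_exists_forall_reachable _).2 ⟨a, fun w => ?_⟩,
    hacyclic.sup_edge_of_not_reachable hab⟩
  rcases hreach w with hwa | hwb
  · exact (hwa.mono le_sup_left).symm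
  · exact hadj.reachable.trans (hwb.mono le_sup_left).symm

theorem IsTree.isSeparatingTwoForest_deleteEdges {T : SimpleGraph V} {a b : V}
    (hT : T.IsTree) (hab : T.Adj a b) :
    (T.deleteEdges {s(a, b)}).IsSeparatingTwoForest a b :=
  ⟨hT.isAcyclic.anti (deleteEdges_le _), isAcyclic_iff_forall_adj_isBridge.1 hT.isAcyclic hab,
    fun w => reachable_deleteEdges_or_of_reachable (hT.connected w a)⟩

theorem sup_edge_deleteEdges {G : SimpleGraph V} {a b : V} (h : ¬G.Adj a b) :
    (G ⊔ edge a b).deleteEdges {s(a, b)} = G :=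
  sup_sdiff_right_self.trans (sdiff_edge _ h)

theorem deleteEdges_sup_edge {G : SimpleGraph V} {a b : V} (h : G.Adj a b) :
    G.deleteEdges {s(a, b)} ⊔ edge a b = G :=
  sdiff_sup_cancel ((edge_le_iff _).2 (Or.inr h))

def isSeparatingTwoForestEquivIsTreeAdj (a b : V) :
    {F : SimpleGraph V // F.IsSeparatingTwoForest a b} ≃
      {T : SimpleGraph V // T.IsTree ∧ T.Adj a b} where
  toFun F := ⟨F.1 ⊔ edge a b, F.2.isTree_sup_edge, F.1.sup_edge_adj F.2.ne⟩
  invFun T := ⟨T.1.deleteEdges {s(a, b)}, T.2.1.isSeparatingTwoForest_deleteEdges T.2.2⟩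
  left_inv F := Subtype.ext (sup_edge_deleteEdges fun h => F.2.2.1 h.reachable)
  right_inv T := Subtype.ext (deleteEdges_sup_edge T.2.2)

def sigmaDartTopEquivSigmaDart (P : SimpleGraph V → Prop) :
    (Σ d : (⊤ : SimpleGraph V).Dart, {G : SimpleGraph V // P G ∧ G.Adj d.fst d.snd}) ≃
      Σ G : {G : SimpleGraph V // P G}, G.1.Dart where
  toFun x := ⟨⟨x.2.1, x.2.2.1⟩, ⟨x.1.toProd, x.2.2.2⟩⟩
  invFun y := ⟨⟨y.2.toProd, y.2.adj.ne⟩, ⟨y.1.1, y.1.2, y.2.adj⟩⟩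
  left_inv _ := rfl
  right_inv _ := rfl

theorem card_dart_top [Fintype V] [DecidableEq V] :
    Fintype.card (⊤ : SimpleGraph V).Dart = 2 * (Fintype.card V).choose 2 := by
  rw [dart_card_eq_twice_card_edges, card_edgeFinset_top_eq_card_choose_two]

theorem IsTree.card_dart [Fintype V] {T : SimpleGraph V} [DecidableRel T.Adj]
    (hT : T.IsTree) : Fintype.card T.Dart = 2 * (Fintype.card V - 1) := by
  rw [dart_card_eq_twice_card_edges, ← hT.card_edgeFinset, Nat.add_sub_cancel]

theorem choose_two_mul_card_isSeparatingTwoForest [Fintype V] {u v : V} (huv : u ≠ v) :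
    (Fintype.card V).choose 2 * Nat.card {F : SimpleGraph V // F.IsSeparatingTwoForest u v} =
      (Fintype.card V - 1) * Nat.card {T : SimpleGraph V // T.IsTree} := by
  classical
  have hforests : Nat.card (Σ d : (⊤ : SimpleGraph V).Dart,
        {T : SimpleGraph V // T.IsTree ∧ T.Adj d.fst d.snd}) =
      2 * (Fintype.card V).choose 2 *
        Nat.card {F : SimpleGraph V // F.IsSeparatingTwoForest u v} := by
    rw [Nat.card_sigma]
    simp_rw [← Nat.card_congr (isSeparatingTwoForestEquivIsTreeAdj _ _),
      fun d : (⊤ : SimpleGraph V).Dart => card_isSeparatingTwoForest_congr d.adj.ne huv]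
    rw [Finset.sum_const, Finset.card_univ, card_dart_top, smul_eq_mul]
  have htrees : Nat.card (Σ T : {T : SimpleGraph V // T.IsTree}, T.1.Dart) =
      Nat.card {T : SimpleGraph V // T.IsTree} * (2 * (Fintype.card V - 1)) := by
    rw [Nat.card_sigma]
    simp_rw [Nat.card_eq_fintype_card (α := Dart _),
      fun T : {T : SimpleGraph V // T.IsTree} => T.2.card_dart]
    rw [Finset.sum_const, Finset.card_univ, smul_eq_mul, Nat.card_eq_fintype_card]
  have hdouble := Nat.card_congr (sigmaDartTopEquivSigmaDart (IsTree (V := V)))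
  rw [hforests, htrees] at hdouble
  linarith

def spanningSubgraphTopEquiv (P : SimpleGraph V → Prop) :
    {H : (⊤ : SimpleGraph V).Subgraph // H.IsSpanning ∧ P H.spanningCoe} ≃
      {G : SimpleGraph V // P G} where
  toFun H := ⟨H.1.spanningCoe, H.2.2⟩
  invFun G := ⟨⟨Set.univ, G.1.Adj, fun h => h.ne, fun _ => Set.mem_univ _, G.1.symm⟩,
    fun _ => Set.mem_univ _, G.2⟩
  left_inv H := Subtype.ext (Subgraph.ext (Set.eq_univ_of_forall H.2.1).symm rfl)
  right_inv _ := rfl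

end SimpleGraph

theorem spanning_tree_forest_double_counting_general
    (N : ℕ) (u v : Fin N) (huv : u ≠ v)
    (χ₁ χ₂ : ℕ)
    (hχ₁ : χ₁ = Nat.card {H : (⊤ : SimpleGraph (Fin N)).Subgraph //
        H.IsSpanning ∧ H.spanningCoe.IsAcyclic ∧ H.spanningCoe.Connected})
    (hχ₂ : χ₂ = Nat.card {H : (⊤ : SimpleGraph (Fin N)).Subgraph //
        H.IsSpanning ∧ H.spanningCoe.IsAcyclic ∧
        ¬ H.spanningCoe.Reachable u v ∧
        (∀ w : Fin N, H.spanningCoe.Reachable w u ∨ H.spanningCoe.Reachable w v)}) :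
    Nat.choose N 2 * χ₂ = (N - 1) * χ₁ := by
  have hforests : χ₂ = Nat.card {F : SimpleGraph (Fin N) // F.IsSeparatingTwoForest u v} :=
    hχ₂.trans <| Nat.card_congr <|
      SimpleGraph.spanningSubgraphTopEquiv (·.IsSeparatingTwoForest u v)
  have htrees : χ₁ = Nat.card {T : SimpleGraph (Fin N) // T.IsTree} :=
    hχ₁.trans <| Nat.card_congr <|
      (SimpleGraph.spanningSubgraphTopEquiv fun G => G.IsAcyclic ∧ G.Connected).trans <|
        Equiv.subtypeEquivRight fun _ => ⟨fun h => ⟨h.2, h.1⟩, fun h => ⟨h.2, h.1⟩⟩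
  simpa [hforests, htrees] using SimpleGraph.choose_two_mul_card_isSeparatingTwoForest huv

theorem spanning_tree_forest_double_counting
    (N : ℕ) (hN : 3 ≤ N) (u v : Fin N) (huv : u ≠ v)
    (χ₁ χ₂ : ℕ)
    (hχ₁ : χ₁ = Nat.card {H : (⊤ : SimpleGraph (Fin N)).Subgraph //
        H.IsSpanning ∧ H.spanningCoe.IsAcyclic ∧ H.spanningCoe.Connected})
    (hχ₁card : χ₁ = N ^ (N - 2))
    (hχ₂ : χ₂ = Nat.card {H : (⊤ : SimpleGraph (Fin N)).Subgraph //
        H.IsSpanning ∧ H.spanningCoe.IsAcyclic ∧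
        ¬ H.spanningCoe.Reachable u v ∧
        (∀ w : Fin N, H.spanningCoe.Reachable w u ∨ H.spanningCoe.Reachable w v)}) :
    Nat.choose N 2 * χ₂ = (N - 1) * χ₁ :=
  spanning_tree_forest_double_counting_general N u v huv χ₁ χ₂ hχ₁ hχ₂
end

section
/- Let N ≥ 2, 1 ≤ ℓ ≤ N, m = N - ℓ, θ ∈ ℝ, α = -1 - (N-1) cos θ, β = α + i sin θ. Let L(θ) = J_N - (1 + (N-1) cos θ) I_N + i sin θ · Π, where Π is the diagonal projection onto the first ℓ coordinates. Then det L(θ) = β^ℓ α^m + ℓ β^{ℓ-1} α^m + m β^ℓ α^{m-1}. -/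
/-!
`L(θ)` is the all-ones matrix plus the diagonal matrix with entries `β` (first `ℓ` places) and `α`
(remaining `m` places). For any diagonal `D = diag d`, the matrix determinant lemma gives
`det (D + J) = det D + 𝟙ᵀ adj(D) 𝟙 = ∏ᵢ dᵢ + ∑ᵢ ∏_{j ≠ i} dⱼ`, and for two-valued `d` the
right-hand side is `β^ℓ α^m + ℓ β^(ℓ-1) α^m + m β^ℓ α^(m-1)`.
-/

open Matrix Finset

namespace Finset

variable {ι R : Type*} [CommMonoid R] (p : ι → Prop) [DecidablePred p] (b a : R)

theorem prod_ite_const (s : Finset ι) :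
    ∏ i ∈ s, (if p i then b else a) = b ^ #{i ∈ s | p i} * a ^ #{i ∈ s | ¬p i} := by
  rw [prod_ite, prod_const, prod_const]

variable [Fintype ι] [DecidableEq ι] {i : ι}

theorem prod_erase_ite_const_of_pos (hi : p i) :
    ∏ j ∈ univ.erase i, (if p j then b else a) = b ^ (#{j | p j} - 1) * a ^ #{j | ¬p j} := by
  rw [prod_ite_const, filter_erase, filter_erase, card_erase_of_mem (by simpa using hi),
    erase_eq_of_notMem (by simpa using hi)]

theorem prod_erase_ite_const_of_neg (hi : ¬p i) :
    ∏ j ∈ univ.erase i, (if p j then b else a) = b ^ #{j | p j} * a ^ (#{j | ¬p j} - 1) := by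
  rw [prod_ite_const, filter_erase, filter_erase, erase_eq_of_notMem (by simpa using hi),
    card_erase_of_mem (by simpa using hi)]

end Finset

namespace Matrix

variable {ι : Type*} [Fintype ι] [DecidableEq ι]

theorem det_diagonal_add_ones_of_ne_zero {K : Type*} [Field K] (d : ι → K) (hd : ∀ i, d i ≠ 0) :
    (diagonal d + of fun _ _ => (1 : K)).det = ∏ i, d i + ∑ i, ∏ j ∈ univ.erase i, d j := by
  have hones : (of fun _ _ => (1 : K) : Matrix ι ι K) =
      replicateCol Unit (fun _ => (1 : K)) * replicateRow Unit (fun _ => (1 : K)) := by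
    ext; simp [mul_apply]
  have hunit : IsUnit (diagonal d).det := by
    rw [det_diagonal]; exact (prod_ne_zero_iff.mpr fun i _ => hd i).isUnit
  have hinv : (diagonal d)⁻¹ = diagonal fun i => (d i)⁻¹ :=
    inv_eq_left_inv <| by simp [diagonal_mul_diagonal, hd]
  rw [hones, det_add_replicateCol_mul_replicateRow hunit, hinv, det_diagonal, det_unique]
  simp only [add_apply, one_apply_eq, mul_apply, replicateRow_apply, replicateCol_apply,
    diagonal_apply, mul_ite, mul_zero, one_mul, mul_one, sum_ite_eq', mem_univ, if_true,
    mul_add, mul_sum]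
  refine congrArg _ (sum_congr rfl fun i _ => ?_)
  rw [← mul_prod_erase univ d (mem_univ i)]
  field_simp [hd i]

theorem _root_.RingHom.mapMatrix_diagonal_add_ones {R S : Type*} [CommRing R] [CommRing S]
    (f : R →+* S) (d : ι → R) :
    f.mapMatrix (diagonal d + of fun _ _ => (1 : R)) =
      diagonal (fun i => f (d i)) + of fun _ _ => 1 := by
  ext i j
  by_cases h : i = j <;> simp [h]

/-- The general case follows from the generic one, `d = X` over `ℤ[X_i]`, which is checked in the
fraction field, where the `X_i` are invertible. -/
theorem det_diagonal_add_ones {R : Type*} [CommRing R] (d : ι → R) :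
    (diagonal d + of fun _ _ => (1 : R)).det = ∏ i, d i + ∑ i, ∏ j ∈ univ.erase i, d j := by
  let X : ι → MvPolynomial ι ℤ := MvPolynomial.X
  have generic : (diagonal X + of fun _ _ => 1).det = ∏ i, X i + ∑ i, ∏ j ∈ univ.erase i, X j := by
    let φ := algebraMap (MvPolynomial ι ℤ) (FractionRing (MvPolynomial ι ℤ))
    apply IsFractionRing.injective (MvPolynomial ι ℤ) (FractionRing (MvPolynomial ι ℤ))
    rw [RingHom.map_det, RingHom.mapMatrix_diagonal_add_ones]
    have := det_diagonal_add_ones_of_ne_zero (fun i => φ (X i)) fun i => by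
      simp [φ, X, MvPolynomial.X_ne_zero]
    simpa [φ] using this
  have := congrArg (MvPolynomial.eval₂Hom (Int.castRingHom R) d) generic
  rw [RingHom.map_det, RingHom.mapMatrix_diagonal_add_ones] at this
  simpa only [map_add, map_prod, map_sum, X, MvPolynomial.eval₂Hom_X'] using this

theorem det_diagonal_ite_add_ones {R : Type*} [CommRing R] (p : ι → Prop) [DecidablePred p]
    (b a : R) :
    (diagonal (fun i => if p i then b else a) + of fun _ _ => (1 : R)).det =
      b ^ #{i | p i} * a ^ #{i | ¬p i} + #{i | p i} * b ^ (#{i | p i} - 1) * a ^ #{i | ¬p i}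
        + #{i | ¬p i} * b ^ #{i | p i} * a ^ (#{i | ¬p i} - 1) := by
  rw [det_diagonal_add_ones, prod_ite_const, ← sum_filter_add_sum_filter_not univ p,
    sum_congr rfl fun i hi => prod_erase_ite_const_of_pos p b a (mem_filter.mp hi).2,
    sum_congr rfl fun i hi => prod_erase_ite_const_of_neg p b a (mem_filter.mp hi).2,
    sum_const, sum_const, nsmul_eq_mul, nsmul_eq_mul]
  ring

end Matrix

theorem complete_graph_generalized_laplacian_det_general
    (N ℓ : ℕ) (hℓN : ℓ ≤ N) (m : ℕ) (hm : m = N - ℓ)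
    (θ : ℝ) (α β : ℂ)
    (hα : α = -1 - ((N : ℂ) - 1) * Real.cos θ)
    (hβ : β = α + Real.sin θ * Complex.I) :
    let Pi0 : Matrix (Fin N) (Fin N) ℂ :=
      Matrix.diagonal fun i => if (i : ℕ) < ℓ then 1 else 0
    let L : Matrix (Fin N) (Fin N) ℂ :=
      (Matrix.of fun _ _ => (1 : ℂ))
        - (1 + ((N : ℂ) - 1) * Real.cos θ) • (1 : Matrix (Fin N) (Fin N) ℂ)
        + (Real.sin θ * Complex.I) • Pi0
    L.det = β ^ ℓ * α ^ m + ℓ * β ^ (ℓ - 1) * α ^ m + m * β ^ ℓ * α ^ (m - 1) := by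
  intro Pi0 L
  have hL : L = diagonal (fun i : Fin N => if (i : ℕ) < ℓ then β else α) + of fun _ _ => 1 := by
    ext i j
    by_cases hij : i = j
    · subst hij
      by_cases hi : (i : ℕ) < ℓ <;> simp [L, Pi0, hi, hα, hβ] <;> ring
    · simp [L, Pi0, hij]
  have hcard : #{i : Fin N | (i : ℕ) < ℓ} = ℓ := by
    simpa [hℓN] using Fin.card_filter_val_lt (n := N) (m := ℓ)
  have hcard_compl : #{i : Fin N | ¬(i : ℕ) < ℓ} = m := by
    rw [filter_not, card_sdiff_of_subset (filter_subset _ _), hcard, card_univ,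
      Fintype.card_fin, hm]
  rw [hL, det_diagonal_ite_add_ones, hcard, hcard_compl]

theorem complete_graph_generalized_laplacian_det
    (N ℓ : ℕ) (hN : 2 ≤ N) (hℓ1 : 1 ≤ ℓ) (hℓN : ℓ ≤ N) (m : ℕ) (hm : m = N - ℓ)
    (θ : ℝ) (α β : ℂ)
    (hα : α = -1 - ((N : ℂ) - 1) * Real.cos θ)
    (hβ : β = α + Real.sin θ * Complex.I) :
    let Pi0 : Matrix (Fin N) (Fin N) ℂ :=
      Matrix.diagonal fun i => if (i : ℕ) < ℓ then 1 else 0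
    let L : Matrix (Fin N) (Fin N) ℂ :=
      (Matrix.of fun _ _ => (1 : ℂ))
        - (1 + ((N : ℂ) - 1) * Real.cos θ) • (1 : Matrix (Fin N) (Fin N) ℂ)
        + (Real.sin θ * Complex.I) • Pi0
    L.det = β ^ ℓ * α ^ m + ℓ * β ^ (ℓ - 1) * α ^ m + m * β ^ ℓ * α ^ (m - 1) :=
  complete_graph_generalized_laplacian_det_general N ℓ hℓN m hm θ α β hα hβ
end

section
/- With the notation of the complete graph generalized Laplacian L(θ) = J_N - (1+(N-1)cos θ) I_N + i sin θ Π (Π projecting onto the first ℓ coordinates, m = N - ℓ, α = -1-(N-1)cos θ, β = α + i sin θ): if βα(βα + ℓα + mβ) ≠ 0, then L(θ) is invertible and its inverse has entries (L(θ)⁻¹)_{ij} = [βα(βα+ℓα+mβ)]⁻¹ times: βα² + (ℓ-1)α² + mβα if 1 ≤ i = j ≤ ℓ; -α² if 1 ≤ i,j ≤ ℓ, i ≠ j; αβ² + (m-1)β² + ℓβα if ℓ < i = j ≤ N; -β² if ℓ < i,j ≤ N, i ≠ j; -βα otherwise. -/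
/-!
Since `-(1 + (N - 1) cos θ) = α`, the matrix is `L(θ) = D + 𝟙𝟙ᵀ` with `D` diagonal, carrying `β`
in the first `ℓ` positions and `α` in the remaining `m`. The Sherman–Morrison formula inverts this
rank-one perturbation: `L(θ)⁻¹ = D⁻¹ - (1 + 𝟙ᵀD⁻¹𝟙)⁻¹ D⁻¹𝟙𝟙ᵀD⁻¹`, where
`1 + 𝟙ᵀD⁻¹𝟙 = 1 + ℓ/β + m/α = (βα + ℓα + mβ)/(βα)`; reading off the entries gives the formula.
-/

open Matrix

theorem Fin.sum_ite_val_lt {M : Type*} [AddCommMonoid M] {N ℓ : ℕ} (hℓN : ℓ ≤ N) (a b : M) :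
    ∑ i : Fin N, (if (i : ℕ) < ℓ then a else b) = ℓ • a + (N - ℓ) • b := by
  rw [Fin.sum_univ_eq_sum_range (fun i => if i < ℓ then a else b), ← Nat.add_sub_cancel' hℓN,
    Finset.sum_range_add, Nat.add_sub_cancel_left,
    Finset.sum_congr rfl fun x hx => if_pos (Finset.mem_range.mp hx)]
  simp

namespace Matrix

variable {n K : Type*} [Fintype n] [DecidableEq n] [Field K]

theorem add_vecMulVec_mul_eq_one_of_mul_eq_one {A B : Matrix n n K} (hAB : A * B = 1)
    (u v : n → K) (hc : 1 + v ⬝ᵥ (B *ᵥ u) ≠ 0) :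
    (A + vecMulVec u v) *
      (B - (1 + v ⬝ᵥ (B *ᵥ u))⁻¹ • vecMulVec (B *ᵥ u) (v ᵥ* B)) = 1 := by
  set c := 1 + v ⬝ᵥ (B *ᵥ u) with hc_def
  have hAu : A *ᵥ (B *ᵥ u) = u := by rw [mulVec_mulVec, hAB, one_mulVec]
  have hscalar : 1 - c⁻¹ - c⁻¹ * (v ⬝ᵥ (B *ᵥ u)) = 0 := by
    field_simp
    rw [hc_def]
    ring
  calc (A + vecMulVec u v) * (B - c⁻¹ • vecMulVec (B *ᵥ u) (v ᵥ* B))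
      = 1 + (1 - c⁻¹ - c⁻¹ * (v ⬝ᵥ (B *ᵥ u))) • vecMulVec u (v ᵥ* B) := by
        rw [Matrix.add_mul, Matrix.mul_sub, Matrix.mul_sub, hAB, Matrix.mul_smul,
          Matrix.mul_smul, mul_vecMulVec, hAu, vecMulVec_mul, vecMulVec_mul_vecMulVec,
          vecMulVec_smul]
        module
    _ = 1 := by rw [hscalar, zero_smul, add_zero]

theorem isUnit_and_inv_diagonal_add_vecMulVec_one {d : n → K} (hd : ∀ i, d i ≠ 0)
    (hs : 1 + ∑ i, (d i)⁻¹ ≠ 0) :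
    IsUnit (diagonal d + vecMulVec 1 1) ∧
      (diagonal d + vecMulVec 1 1)⁻¹ =
        diagonal d⁻¹ - (1 + ∑ i, (d i)⁻¹)⁻¹ • vecMulVec d⁻¹ d⁻¹ := by
  have hdd : diagonal d * diagonal d⁻¹ = 1 := by
    rw [diagonal_mul_diagonal, ← diagonal_one]
    exact congrArg diagonal (funext fun i => mul_inv_cancel₀ (hd i))
  have hdu : diagonal d⁻¹ *ᵥ 1 = d⁻¹ := by ext; simp [mulVec_diagonal]
  have hdv : 1 ᵥ* diagonal d⁻¹ = d⁻¹ := by ext; simp [vecMul_diagonal]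
  have hsum : (1 : n → K) ⬝ᵥ d⁻¹ = ∑ i, (d i)⁻¹ := by simp [dotProduct]
  have h := add_vecMulVec_mul_eq_one_of_mul_eq_one hdd 1 1
  rw [hdu, hdv, hsum] at h
  specialize h hs
  exact ⟨(isUnit_iff_isUnit_det _).mpr (isUnit_det_of_right_inverse h), inv_eq_right_inv h⟩

end Matrix

theorem complete_graph_generalized_laplacian_inverse_general
    (N ℓ : ℕ) (hℓN : ℓ ≤ N) (m : ℕ) (hm : m = N - ℓ)
    (θ : ℝ) (α β : ℂ)
    (hα : α = -1 - ((N : ℂ) - 1) * Real.cos θ)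
    (hβ : β = α + Real.sin θ * Complex.I)
    (hne : β * α * (β * α + ℓ * α + m * β) ≠ 0) :
    let Pi0 : Matrix (Fin N) (Fin N) ℂ :=
      Matrix.diagonal fun i => if (i : ℕ) < ℓ then 1 else 0
    let L : Matrix (Fin N) (Fin N) ℂ :=
      (Matrix.of fun _ _ => (1 : ℂ))
        - (1 + ((N : ℂ) - 1) * Real.cos θ) • (1 : Matrix (Fin N) (Fin N) ℂ)
        + (Real.sin θ * Complex.I) • Pi0
    IsUnit L ∧
    L⁻¹ = Matrix.of (fun i j : Fin N =>
      (β * α * (β * α + ℓ * α + m * β))⁻¹ *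
        (if (i : ℕ) < ℓ ∧ (j : ℕ) < ℓ then
          (if i = j then β * α ^ 2 + ((ℓ : ℂ) - 1) * α ^ 2 + m * β * α
           else -α ^ 2)
         else if ℓ ≤ (i : ℕ) ∧ ℓ ≤ (j : ℕ) then
          (if i = j then α * β ^ 2 + ((m : ℂ) - 1) * β ^ 2 + ℓ * β * α
           else -β ^ 2)
         else -β * α)) := by
  intro Pi0 L
  have hβ0 : β ≠ 0 := left_ne_zero_of_mul (left_ne_zero_of_mul hne)
  have hα0 : α ≠ 0 := right_ne_zero_of_mul (left_ne_zero_of_mul hne)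
  have hS0 : β * α + ℓ * α + m * β ≠ 0 := right_ne_zero_of_mul hne
  set d : Fin N → ℂ := fun i => if (i : ℕ) < ℓ then β else α
  have hd0 : ∀ i, d i ≠ 0 := fun i => by dsimp only [d]; split_ifs <;> assumption
  have hL : L = diagonal d + vecMulVec 1 1 := by
    ext i j
    obtain rfl | hij := eq_or_ne i j
    · by_cases hi : (i : ℕ) < ℓ <;> simp [L, Pi0, d, hi, hα, hβ] <;> ring
    · simp [L, Pi0, hij, one_apply]
  have hsum : ∑ i, (d i)⁻¹ = ℓ * β⁻¹ + m * α⁻¹ := by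
    rw [hm, ← nsmul_eq_mul, ← nsmul_eq_mul, ← Fin.sum_ite_val_lt hℓN]
    exact Finset.sum_congr rfl fun i _ => apply_ite _ _ _ _
  have hcoef : (1 + ∑ i, (d i)⁻¹)⁻¹ = β * α * (β * α + ℓ * α + m * β)⁻¹ := by
    rw [hsum]
    field_simp
    ring
  have hs : 1 + ∑ i, (d i)⁻¹ ≠ 0 := by
    rw [Ne, ← inv_eq_zero, hcoef]
    exact mul_ne_zero (mul_ne_zero hβ0 hα0) (inv_ne_zero hS0)
  obtain ⟨hunit, hinv⟩ := isUnit_and_inv_diagonal_add_vecMulVec_one hd0 hs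
  rw [hL]
  refine ⟨hunit, hinv.trans ?_⟩
  rw [hcoef]
  -- with `S` opaque, `field_simp` can clear it as a denominator
  generalize hS : β * α + ℓ * α + m * β = S at hS0 ⊢
  ext i j
  simp only [Matrix.sub_apply, diagonal_apply, Matrix.smul_apply, vecMulVec_apply,
    Pi.inv_apply, of_apply, smul_eq_mul]
  obtain rfl | hij := eq_or_ne i j
  · by_cases hi : (i : ℕ) < ℓ <;> simp [d, hi, ← not_lt] <;> field_simp <;> rw [← hS] <;> ring
  · by_cases hi : (i : ℕ) < ℓ <;> by_cases hj : (j : ℕ) < ℓ <;>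
      simp [d, hi, hj, hij, ← not_lt] <;> field_simp

theorem complete_graph_generalized_laplacian_inverse
    (N ℓ : ℕ) (hN : 2 ≤ N) (hℓ1 : 1 ≤ ℓ) (hℓN : ℓ ≤ N) (m : ℕ) (hm : m = N - ℓ)
    (θ : ℝ) (α β : ℂ)
    (hα : α = -1 - ((N : ℂ) - 1) * Real.cos θ)
    (hβ : β = α + Real.sin θ * Complex.I)
    (hne : β * α * (β * α + ℓ * α + m * β) ≠ 0) :
    let Pi0 : Matrix (Fin N) (Fin N) ℂ :=
      Matrix.diagonal fun i => if (i : ℕ) < ℓ then 1 else 0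
    let L : Matrix (Fin N) (Fin N) ℂ :=
      (Matrix.of fun _ _ => (1 : ℂ))
        - (1 + ((N : ℂ) - 1) * Real.cos θ) • (1 : Matrix (Fin N) (Fin N) ℂ)
        + (Real.sin θ * Complex.I) • Pi0
    IsUnit L ∧
    L⁻¹ = Matrix.of (fun i j : Fin N =>
      (β * α * (β * α + ℓ * α + m * β))⁻¹ *
        (if (i : ℕ) < ℓ ∧ (j : ℕ) < ℓ then
          (if i = j then β * α ^ 2 + ((ℓ : ℂ) - 1) * α ^ 2 + m * β * α
           else -α ^ 2)
         else if ℓ ≤ (i : ℕ) ∧ ℓ ≤ (j : ℕ) then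
          (if i = j then α * β ^ 2 + ((m : ℂ) - 1) * β ^ 2 + ℓ * β * α
           else -β ^ 2)
         else -β * α)) :=
  complete_graph_generalized_laplacian_inverse_general N ℓ hℓN m hm θ α β hα hβ hne
end

section
/- Let G₀ be a κ-regular finite connected graph (κ ≥ 2) with adjacency matrix M₀, and let μ be a real eigenvalue of M₀ with |μ| ≤ κ. Define z± = (μ ± sqrt(μ² - (κ²-1)))/(κ+1). If μ² ≥ κ² - 1, then z± are real and (κ-1)/(κ+1) ≤ |z±| < 1 when μ ≠ ±κ (and |z_+| = 1 if μ = ±κ); if μ² < κ² - 1, then |z±|² = (κ-1)/(κ+1). -/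
/-!
The two roots `z±` of `(κ + 1) z² - 2 μ z + (κ - 1) = 0` have product `(κ - 1)/(κ + 1)`.
When they are real and `|μ| < κ`, the discriminant root `s = √(μ² - κ² + 1)` is below `1`, so
`|μ ± s| < κ + 1` puts both roots strictly inside the unit disc; the product then forces each of
them to have modulus at least `(κ - 1)/(κ + 1)`. When they are complex they are conjugate, so
each has squared modulus equal to the product.
-/

open Complex

namespace TruncatedGrover

variable {k μ : ℝ}

theorem real_roots_mul (hk : k + 1 ≠ 0) (hdisc : k ^ 2 - 1 ≤ μ ^ 2) :
    (μ + √(μ ^ 2 - (k ^ 2 - 1))) / (k + 1) * ((μ - √(μ ^ 2 - (k ^ 2 - 1))) / (k + 1)) =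
      (k - 1) / (k + 1) := by
  have hs := Real.sq_sqrt (sub_nonneg.mpr hdisc)
  field_simp
  linear_combination -hs

theorem sqrt_discr_lt_one (hμ : |μ| < k) : √(μ ^ 2 - (k ^ 2 - 1)) < 1 := by
  have : μ ^ 2 < k ^ 2 := sq_lt_sq' (abs_lt.mp hμ).1 (abs_lt.mp hμ).2
  rw [Real.sqrt_lt' one_pos]
  linarith

theorem abs_real_roots_lt_one (hk : 0 < k + 1) (hμ : |μ| < k) :
    |(μ + √(μ ^ 2 - (k ^ 2 - 1))) / (k + 1)| < 1 ∧
      |(μ - √(μ ^ 2 - (k ^ 2 - 1))) / (k + 1)| < 1 := by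
  set s := √(μ ^ 2 - (k ^ 2 - 1))
  have hs : |s| < 1 := by
    rw [abs_of_nonneg (Real.sqrt_nonneg _)]
    exact sqrt_discr_lt_one hμ
  rw [abs_div, abs_div, abs_of_pos hk, div_lt_one hk, div_lt_one hk]
  exact ⟨(abs_add_le μ s).trans_lt (by linarith), (abs_sub μ s).trans_lt (by linarith)⟩

theorem le_abs_of_mul_eq {a b p : ℝ} (hab : a * b = p) (hb : |b| ≤ 1) : p ≤ |a| :=
  calc p ≤ |a * b| := hab ▸ le_abs_self _
    _ = |a| * |b| := abs_mul a b
    _ ≤ |a| := mul_le_of_le_one_right (abs_nonneg a) hb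

theorem normSq_complex_root {t : ℝ} (hk : k + 1 ≠ 0) (ht : t ^ 2 = k ^ 2 - 1 - μ ^ 2) :
    normSq ((μ + t * I) / (k + 1)) = (k - 1) / (k + 1) := by
  have hk' : (k : ℂ) + 1 = ((k + 1 : ℝ) : ℂ) := by push_cast; rfl
  rw [map_div₀, normSq_add_mul_I, hk', normSq_ofReal]
  field_simp
  linear_combination ht

end TruncatedGrover

open TruncatedGrover

theorem truncated_grover_eigenvalue_location_general
    (κ : ℕ)
    (μ : ℝ)
    (hμκ : |μ| ≤ (κ : ℝ)) :
    (μ ^ 2 ≥ (κ : ℝ) ^ 2 - 1 →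
      let zp : ℝ := (μ + Real.sqrt (μ ^ 2 - ((κ : ℝ) ^ 2 - 1))) / ((κ : ℝ) + 1)
      let zm : ℝ := (μ - Real.sqrt (μ ^ 2 - ((κ : ℝ) ^ 2 - 1))) / ((κ : ℝ) + 1)
      ((μ ≠ (κ : ℝ) ∧ μ ≠ -(κ : ℝ)) →
        (((κ : ℝ) - 1) / ((κ : ℝ) + 1) ≤ |zp| ∧ |zp| < 1 ∧
         ((κ : ℝ) - 1) / ((κ : ℝ) + 1) ≤ |zm| ∧ |zm| < 1)) ∧
      ((μ = (κ : ℝ) ∨ μ = -(κ : ℝ)) → |zp| = 1 ∨ |zm| = 1)) ∧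
    (μ ^ 2 < (κ : ℝ) ^ 2 - 1 →
      let zp : ℂ := ((μ : ℂ) + Real.sqrt ((κ : ℝ) ^ 2 - 1 - μ ^ 2) * Complex.I) /
        ((κ : ℂ) + 1)
      let zm : ℂ := ((μ : ℂ) - Real.sqrt ((κ : ℝ) ^ 2 - 1 - μ ^ 2) * Complex.I) /
        ((κ : ℂ) + 1)
      Complex.normSq zp = ((κ : ℝ) - 1) / ((κ : ℝ) + 1) ∧
      Complex.normSq zm = ((κ : ℝ) - 1) / ((κ : ℝ) + 1)) := by
  have hk : (0 : ℝ) < κ + 1 := by positivity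
  refine ⟨fun hdisc => ⟨fun ⟨hne, hne'⟩ => ?_, ?_⟩, fun hdisc => ?_⟩
  · have hμ : |μ| < κ :=
      hμκ.lt_of_ne fun h => ((abs_eq (Nat.cast_nonneg κ)).mp h).elim hne hne'
    have hprod := real_roots_mul hk.ne' hdisc
    obtain ⟨hzp, hzm⟩ := abs_real_roots_lt_one hk hμ
    exact ⟨le_abs_of_mul_eq hprod hzm.le, hzp,
      le_abs_of_mul_eq ((mul_comm _ _).trans hprod) hzp.le, hzm⟩
  · have hs : √((κ : ℝ) ^ 2 - ((κ : ℝ) ^ 2 - 1)) = 1 := by norm_num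
    rintro (rfl | rfl)
    · left
      rw [hs, div_self hk.ne', abs_one]
    · right
      rw [neg_sq, hs, ← neg_add', neg_div, div_self hk.ne', abs_neg, abs_one]
  · have ht := Real.sq_sqrt (sub_nonneg.mpr hdisc.le)
    have hzp := normSq_complex_root hk.ne' ht
    have hzm := normSq_complex_root hk.ne' ((neg_sq _).trans ht)
    push_cast at hzp hzm
    exact ⟨hzp, by simpa [← sub_eq_add_neg] using hzm⟩

theorem truncated_grover_eigenvalue_location
    {V : Type*} [Fintype V] [DecidableEq V]
    (G : SimpleGraph V) [DecidableRel G.Adj] (hG : G.Connected)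
    (κ : ℕ) (hκ : 2 ≤ κ) (hreg : G.IsRegularOfDegree κ)
    (μ : ℝ)
    (hμ : ∃ v : V → ℝ, v ≠ 0 ∧ (G.adjMatrix ℝ).mulVec v = μ • v)
    (hμκ : |μ| ≤ (κ : ℝ)) :
    (μ ^ 2 ≥ (κ : ℝ) ^ 2 - 1 →
      let zp : ℝ := (μ + Real.sqrt (μ ^ 2 - ((κ : ℝ) ^ 2 - 1))) / ((κ : ℝ) + 1)
      let zm : ℝ := (μ - Real.sqrt (μ ^ 2 - ((κ : ℝ) ^ 2 - 1))) / ((κ : ℝ) + 1)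
      ((μ ≠ (κ : ℝ) ∧ μ ≠ -(κ : ℝ)) →
        (((κ : ℝ) - 1) / ((κ : ℝ) + 1) ≤ |zp| ∧ |zp| < 1 ∧
         ((κ : ℝ) - 1) / ((κ : ℝ) + 1) ≤ |zm| ∧ |zm| < 1)) ∧
      ((μ = (κ : ℝ) ∨ μ = -(κ : ℝ)) → |zp| = 1 ∨ |zm| = 1)) ∧
    (μ ^ 2 < (κ : ℝ) ^ 2 - 1 →
      let zp : ℂ := ((μ : ℂ) + Real.sqrt ((κ : ℝ) ^ 2 - 1 - μ ^ 2) * Complex.I) /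
        ((κ : ℂ) + 1)
      let zm : ℂ := ((μ : ℂ) - Real.sqrt ((κ : ℝ) ^ 2 - 1 - μ ^ 2) * Complex.I) /
        ((κ : ℂ) + 1)
      Complex.normSq zp = ((κ : ℝ) - 1) / ((κ : ℝ) + 1) ∧
      Complex.normSq zm = ((κ : ℝ) - 1) / ((κ : ℝ) + 1)) :=
  truncated_grover_eigenvalue_location_general κ μ hμκ
end

section
/- For integers N ≥ 3 and m with 1 ≤ m ≤ N-1, the sequence m ↦ (m+1)/m · (N-1) is strictly decreasing in m, and for all such m, (m+1)/m · (N-1) > (N-1)³(N²-N+1)/(N(N³-2N²+2N-2)). -/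
/-! Writing `(m + 1) / m = 1 + 1 / m` shows the values for `m ≥ 1` decrease, the smallest being the
one at `m = N - 1`, which equals `N`. The value at `m = 0` lies strictly below `N`: clearing the
positive denominator, this is `2N⁴ - 5N³ + 5N² - 4N + 1 > 0`. -/

theorem add_one_div_lt_add_one_div {K : Type*} [Field K] [LinearOrder K] [IsStrictOrderedRing K]
    {a b : K} (ha : 0 < a) (hab : a < b) : (b + 1) / b < (a + 1) / a := by
  have hb : 0 < b := ha.trans hab
  rw [add_div, add_div, div_self hb.ne', div_self ha.ne', add_lt_add_iff_left]
  exact one_div_lt_one_div_of_lt ha hab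

theorem le_add_one_div_mul_sub_one {K : Type*} [Field K] [LinearOrder K] [IsStrictOrderedRing K]
    {x m : K} (hm : 0 < m) (hmx : m + 1 ≤ x) : x ≤ (m + 1) / m * (x - 1) := by
  rw [div_mul_eq_mul_div, le_div_iff₀ hm]
  nlinarith

theorem comfortability_zero_lt_self {x : ℝ} (hx : 2 ≤ x) :
    (x - 1) ^ 3 * (x ^ 2 - x + 1) / (x * (x ^ 3 - 2 * x ^ 2 + 2 * x - 2)) < x := by
  have hden : 0 < x * (x ^ 3 - 2 * x ^ 2 + 2 * x - 2) := by
    have : 0 < x ^ 2 * (x - 2) + 2 * (x - 1) := by nlinarith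
    nlinarith
  rw [div_lt_iff₀ hden]
  nlinarith [mul_nonneg (mul_nonneg (sub_nonneg.2 hx) (sub_nonneg.2 hx)) (sub_nonneg.2 hx)]

theorem comfortability_at_theta_star_monotone (N : ℕ) (hN : 3 ≤ N) :
    (∀ m₁ m₂ : ℕ, 1 ≤ m₁ → m₁ < m₂ → m₂ ≤ N - 1 →
      ((m₂ : ℝ) + 1) / m₂ * ((N : ℝ) - 1) < ((m₁ : ℝ) + 1) / m₁ * ((N : ℝ) - 1)) ∧
    (∀ m : ℕ, 1 ≤ m → m ≤ N - 1 →
      ((N : ℝ) - 1) ^ 3 * ((N : ℝ) ^ 2 - N + 1) /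
          ((N : ℝ) * ((N : ℝ) ^ 3 - 2 * N ^ 2 + 2 * N - 2))
        < ((m : ℝ) + 1) / m * ((N : ℝ) - 1)) := by
  have hN' : (3 : ℝ) ≤ N := by exact_mod_cast hN
  refine ⟨fun m₁ m₂ h₁ h₁₂ _ => ?_, fun m h₁ hm => ?_⟩
  · exact mul_lt_mul_of_pos_right
      (add_one_div_lt_add_one_div (by exact_mod_cast h₁) (by exact_mod_cast h₁₂)) (by linarith)
  · have hmN : (m : ℝ) + 1 ≤ N := by exact_mod_cast (by omega : m + 1 ≤ N)
    calc _ < (N : ℝ) := comfortability_zero_lt_self (by linarith)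
      _ ≤ _ := le_add_one_div_mul_sub_one (by exact_mod_cast h₁) hmN
end

section
/- For every integer N ≥ 3 and every integer ℓ with 1 ≤ ℓ ≤ N, the quantity E(0,ℓ) := N(N-1)/(2ℓ²) + (ℓ-1)/(ℓN) is strictly decreasing in ℓ. -/
/-!
In the variable `x = ℓ⁻¹` the comfortability is the quadratic `N(N-1)/2 · x² - x/N + 1/N`,
whose vertex `x = 1/(N²(N-1))` lies to the left of `1/N ≤ ℓ⁻¹`. On `ℓ ≤ N` it is therefore
strictly increasing in `ℓ⁻¹`, i.e. strictly decreasing in `ℓ`.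
-/

noncomputable def comfortabilityAtZero (N ℓ : ℝ) : ℝ :=
  N * (N - 1) / (2 * ℓ ^ 2) + (ℓ - 1) / (ℓ * N)

lemma mul_sq_add_mul_lt_of_lt {a b x y : ℝ} (hxy : x < y) (hb : -b < a * (x + y)) :
    a * x ^ 2 + b * x < a * y ^ 2 + b * y := by
  nlinarith [mul_pos (sub_pos.2 hxy) (neg_lt_iff_pos_add.1 hb)]

lemma comfortabilityAtZero_eq {N ℓ : ℝ} (hN : N ≠ 0) (hℓ : ℓ ≠ 0) :
    comfortabilityAtZero N ℓ = N * (N - 1) / 2 * ℓ⁻¹ ^ 2 + -N⁻¹ * ℓ⁻¹ + N⁻¹ := by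
  unfold comfortabilityAtZero
  field_simp
  ring

lemma comfortabilityAtZero_lt_of_lt {N ℓ₁ ℓ₂ : ℝ} (hN : 2 ≤ N) (hℓ₁ : 0 < ℓ₁) (h₁₂ : ℓ₁ < ℓ₂)
    (h₂N : ℓ₂ ≤ N) : comfortabilityAtZero N ℓ₂ < comfortabilityAtZero N ℓ₁ := by
  have hN₀ : 0 < N := by linarith
  rw [comfortabilityAtZero_eq hN₀.ne' (hℓ₁.trans h₁₂).ne',
    comfortabilityAtZero_eq hN₀.ne' hℓ₁.ne']
  refine add_lt_add_left (mul_sq_add_mul_lt_of_lt (inv_strictAnti₀ hℓ₁ h₁₂) ?_) _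
  have hinv : 2 * N⁻¹ < ℓ₂⁻¹ + ℓ₁⁻¹ := by
    have := inv_strictAnti₀ hℓ₁ (h₁₂.trans_le h₂N)
    linarith [inv_anti₀ (hℓ₁.trans h₁₂) h₂N]
  calc -(-N⁻¹) < N - 1 := by
        linarith [inv_anti₀ (by norm_num : (0 : ℝ) < 2) hN]
    _ = N * (N - 1) / 2 * (2 * N⁻¹) := by field_simp
    _ < N * (N - 1) / 2 * (ℓ₂⁻¹ + ℓ₁⁻¹) :=
        mul_lt_mul_of_pos_left hinv (by nlinarith)

theorem comfortability_at_zero_strictly_decreasing_general (N : ℕ) :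
    ∀ ℓ₁ ℓ₂ : ℕ, 1 ≤ ℓ₁ → ℓ₁ < ℓ₂ → ℓ₂ ≤ N →
      (N : ℝ) * ((N : ℝ) - 1) / (2 * (ℓ₂ : ℝ) ^ 2) + ((ℓ₂ : ℝ) - 1) / ((ℓ₂ : ℝ) * N)
        < (N : ℝ) * ((N : ℝ) - 1) / (2 * (ℓ₁ : ℝ) ^ 2) + ((ℓ₁ : ℝ) - 1) / ((ℓ₁ : ℝ) * N) := by
  intro ℓ₁ ℓ₂ h₁ h₁₂ h₂N
  exact comfortabilityAtZero_lt_of_lt (by exact_mod_cast (by omega : 2 ≤ N))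
    (by exact_mod_cast h₁) (by exact_mod_cast h₁₂) (by exact_mod_cast h₂N)

theorem comfortability_at_zero_strictly_decreasing (N : ℕ) (hN : 3 ≤ N) :
    ∀ ℓ₁ ℓ₂ : ℕ, 1 ≤ ℓ₁ → ℓ₁ < ℓ₂ → ℓ₂ ≤ N →
      (N : ℝ) * ((N : ℝ) - 1) / (2 * (ℓ₂ : ℝ) ^ 2) + ((ℓ₂ : ℝ) - 1) / ((ℓ₂ : ℝ) * N)
        < (N : ℝ) * ((N : ℝ) - 1) / (2 * (ℓ₁ : ℝ) ^ 2) + ((ℓ₁ : ℝ) - 1) / ((ℓ₁ : ℝ) * N) :=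
  comfortability_at_zero_strictly_decreasing_general N
end
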